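/- Let p ∈ (0,1). The pushforward of the product measure (Lebesgue measure on [0,1]) ⊗ β(p,1−p) ⊗ β(1−p,p) under the map (u, a, b) ↦ (u, u·a + (1−u)·b) is absolutely continuous with respect to Lebesgue measure on [0,1]², with density (x,y) ↦ (1/(Γ(p)²Γ(1−p)²)) · ∫_{max(x+y−1,0)}^{min(x,y)} z^{p−1} (x−z)^{−p} (y−z)^{−p} (1−x−y+z)^{p−1} dz. -/

import Mathlib

/-!
For fixed `u ∈ (0,1)`, let `A ∼ β(p,1-p)` and `B ∼ β(1-p,p)` be independent. Up to the factor
`1/(Γ(p)Γ(1-p))`, the variables `uA` and `(1-u)B` have densities `z^{p-1}(u-z)^{-p}` on `[0,u]`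
and `w^{-p}(1-u-w)^{p-1}` on `[0,1-u]`: the exponents sum to `-1`, which is exactly what makes the
Jacobian of the scaling disappear. The density of `uA + (1-u)B` at `y` is the convolution of these
two, i.e. the integral of the statement over `z ∈ [max(u+y-1,0), min(u,y)]`, and integrating over
`u` gives the joint density of `(u, uA + (1-u)B)`.
-/

open MeasureTheory

/-- The beta distribution `β(a,b)` on `[0,1]`, with density
`x ↦ x^{a−1}(1−x)^{b−1}/(Γ(a)Γ(b))` with respect to Lebesgue measure. -/
noncomputable def betaMeasure (a b : ℝ) : Measure ℝ :=
  (volume.restrict (Set.Icc (0:ℝ) 1)).withDensity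
    (fun x => ENNReal.ofReal (x ^ (a - 1) * (1 - x) ^ (b - 1) / (Real.Gamma a * Real.Gamma b)))

open Set
open scoped ENNReal

/-- Up to the factor `B(s + 1, t + 1) v ^ (s + t + 1)`, the density of `v • β(s + 1, t + 1)`. -/
noncomputable def scaledBetaDensity (s t v : ℝ) : ℝ → ℝ≥0∞ :=
  (Icc 0 v).indicator fun z => ENNReal.ofReal (z ^ s * (v - z) ^ t)

lemma measurable_scaledBetaDensity (s t : ℝ) :
    Measurable fun q : ℝ × ℝ => scaledBetaDensity s t q.1 q.2 := by
  simp only [scaledBetaDensity, indicator, mem_Icc]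
  refine Measurable.ite ?_ (by fun_prop) measurable_const
  exact (measurableSet_le measurable_const measurable_snd).inter
    (measurableSet_le measurable_snd measurable_fst)

lemma scaledBetaDensity_one_inv_mul {s t v : ℝ} (hst : s + t = -1) (hv : 0 < v) (z : ℝ) :
    scaledBetaDensity s t 1 (v⁻¹ * z) = ENNReal.ofReal v * scaledBetaDensity s t v z := by
  have hmem : v⁻¹ * z ∈ Icc 0 1 ↔ z ∈ Icc 0 v := by
    rw [mem_Icc, mem_Icc, ← div_eq_inv_mul, div_nonneg_iff, div_le_one hv]
    constructor
    · rintro ⟨h | h, hz⟩ <;> [exact ⟨h.1, hz⟩; exact absurd h.2 (not_le.2 hv)]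
    · exact fun h => ⟨Or.inl ⟨h.1, hv.le⟩, h.2⟩
  by_cases hz : z ∈ Icc 0 v
  · rw [scaledBetaDensity, scaledBetaDensity, indicator_of_mem (hmem.2 hz), indicator_of_mem hz,
      ← ENNReal.ofReal_mul hv.le]
    have hvz : 1 - v⁻¹ * z = v⁻¹ * (v - z) := by field_simp
    have hpow : v⁻¹ ^ s * v⁻¹ ^ t = v := by
      rw [← Real.rpow_add (inv_pos.2 hv), hst, Real.rpow_neg_one, inv_inv]
    rw [hvz, Real.mul_rpow (inv_nonneg.2 hv.le) hz.1,
      Real.mul_rpow (inv_nonneg.2 hv.le) (sub_nonneg.2 hz.2), mul_mul_mul_comm, hpow]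
  · rw [scaledBetaDensity, scaledBetaDensity, indicator_of_notMem (mt hmem.1 hz),
      indicator_of_notMem hz, mul_zero]

lemma map_mul_left_withDensity_scaledBetaDensity {s t v : ℝ} (hst : s + t = -1) (hv : 0 < v) :
    (volume.withDensity (scaledBetaDensity s t 1)).map (v * ·) =
      volume.withDensity (scaledBetaDensity s t v) := by
  have hd : ∀ w, Measurable (scaledBetaDensity s t w) := fun w =>
    (measurable_scaledBetaDensity s t).comp measurable_prodMk_left
  refine Measure.ext_of_lintegral _ fun φ hφ => ?_
  rw [lintegral_map hφ (measurable_const_mul v),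
    lintegral_withDensity_eq_lintegral_mul _ (hd 1) (by fun_prop : Measurable fun x => φ (v * x)),
    lintegral_withDensity_eq_lintegral_mul _ (hd v) hφ]
  have hF : Measurable fun y => scaledBetaDensity s t 1 (v⁻¹ * y) * φ y :=
    ((hd 1).comp (measurable_const_mul _)).mul hφ
  calc ∫⁻ x, scaledBetaDensity s t 1 x * φ (v * x)
      = ∫⁻ x, scaledBetaDensity s t 1 (v⁻¹ * (v * x)) * φ (v * x) := by
        simp only [inv_mul_cancel_left₀ hv.ne']
    _ = ENNReal.ofReal v⁻¹ * ∫⁻ y, scaledBetaDensity s t 1 (v⁻¹ * y) * φ y := by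
        rw [← lintegral_map hF (measurable_const_mul v), Real.map_volume_mul_left hv.ne',
          lintegral_smul_measure, abs_of_pos (inv_pos.2 hv), smul_eq_mul]
    _ = ∫⁻ y, scaledBetaDensity s t v y * φ y := by
        simp_rw [scaledBetaDensity_one_inv_mul hst hv, mul_assoc]
        rw [lintegral_const_mul' _ _ ENNReal.ofReal_ne_top, ← mul_assoc,
          ← ENNReal.ofReal_mul (inv_nonneg.2 hv.le), inv_mul_cancel₀ hv.ne', ENNReal.ofReal_one,
          one_mul]

lemma betaMeasure_eq_smul_withDensity (a b : ℝ) :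
    betaMeasure a b = ENNReal.ofReal (Real.Gamma a * Real.Gamma b)⁻¹ •
      volume.withDensity (scaledBetaDensity (a - 1) (b - 1) 1) := by
  rw [betaMeasure, ← withDensity_indicator measurableSet_Icc, ← withDensity_smul' _ _
    ENNReal.ofReal_ne_top]
  congr 1
  funext x
  by_cases hx : x ∈ Icc 0 1
  · rw [Pi.smul_apply, scaledBetaDensity, indicator_of_mem hx, indicator_of_mem hx, smul_eq_mul,
      div_eq_mul_inv, mul_comm, ← ENNReal.ofReal_mul' (by
        exact mul_nonneg (Real.rpow_nonneg hx.1 _) (Real.rpow_nonneg (sub_nonneg.2 hx.2) _))]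
  · rw [Pi.smul_apply, scaledBetaDensity, indicator_of_notMem hx, indicator_of_notMem hx,
      smul_zero]

instance (a b : ℝ) : SFinite (betaMeasure a b) := by
  unfold betaMeasure
  infer_instance

/-- `ProbabilityTheory.betaMeasure a b` is normalised by `Γ(a)Γ(b)/Γ(a+b)` instead of `Γ(a)Γ(b)`. -/
lemma betaMeasure_eq_probabilityTheory_betaMeasure {a b : ℝ} (hab : a + b = 1) :
    betaMeasure a b = ProbabilityTheory.betaMeasure a b := by
  rw [betaMeasure, ProbabilityTheory.betaMeasure, ← Measure.restrict_congr_set Ioo_ae_eq_Icc,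
    ← withDensity_indicator measurableSet_Ioo]
  congr 1
  funext x
  by_cases hx : x ∈ Ioo 0 1
  · rw [indicator_of_mem hx, ProbabilityTheory.betaPDF_of_pos_lt_one hx.1 hx.2,
      ProbabilityTheory.beta, hab, Real.Gamma_one, div_one, one_div, div_eq_inv_mul, mul_assoc]
  · rw [indicator_of_notMem hx, ProbabilityTheory.betaPDF, ProbabilityTheory.betaPDFReal,
      if_neg (show ¬(0 < x ∧ x < 1) from hx), ENNReal.ofReal_zero]

lemma isProbabilityMeasure_betaMeasure {a b : ℝ} (ha : 0 < a) (hb : 0 < b) (hab : a + b = 1) :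
    IsProbabilityMeasure (betaMeasure a b) := by
  rw [betaMeasure_eq_probabilityTheory_betaMeasure hab]
  exact ProbabilityTheory.isProbabilityMeasureBeta ha hb

lemma withDensity_conv_withDensity {G : Type*} [MeasurableSpace G] [AddCommGroup G]
    [MeasurableAdd₂ G] [MeasurableSub₂ G] {μ : Measure G} [SFinite μ] [μ.IsAddLeftInvariant]
    {f g : G → ℝ≥0∞} (hf : Measurable f) (hg : Measurable g) :
    μ.withDensity f ∗ μ.withDensity g = μ.withDensity fun y => ∫⁻ x, f x * g (y - x) ∂μ := by
  refine Measure.ext_of_lintegral _ fun φ hφ => ?_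
  have hconv : Measurable fun y => ∫⁻ x, f x * g (y - x) ∂μ :=
    Measurable.lintegral_prod_right' (f := fun q : G × G => f q.2 * g (q.1 - q.2)) (by fun_prop)
  have hshift : ∀ x, ∫⁻ w, g w * φ (x + w) ∂μ = ∫⁻ y, g (y - x) * φ y ∂μ := fun x => by
    rw [← lintegral_add_left_eq_self (fun y => g (y - x) * φ y) x]
    simp only [add_sub_cancel_left]
  calc ∫⁻ y, φ y ∂(μ.withDensity f ∗ μ.withDensity g)
      = ∫⁻ x, f x * ∫⁻ w, g w * φ (x + w) ∂μ ∂μ := by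
        rw [Measure.lintegral_conv hφ, lintegral_withDensity_eq_lintegral_mul _ hf
          (Measurable.lintegral_prod_right' (f := fun q : G × G => φ (q.1 + q.2)) (by fun_prop))]
        refine lintegral_congr fun x => ?_
        rw [Pi.mul_apply, lintegral_withDensity_eq_lintegral_mul _ hg (by fun_prop)]
        rfl
    _ = ∫⁻ x, ∫⁻ y, f x * g (y - x) * φ y ∂μ ∂μ := by
        refine lintegral_congr fun x => ?_
        rw [hshift, ← lintegral_const_mul _ (by fun_prop)]
        simp only [mul_assoc]
    _ = ∫⁻ y, (∫⁻ x, f x * g (y - x) ∂μ) * φ y ∂μ := by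
        rw [lintegral_lintegral_swap (by fun_prop)]
        refine lintegral_congr fun y => ?_
        rw [lintegral_mul_const _ (by fun_prop)]
    _ = ∫⁻ y, φ y ∂μ.withDensity fun y => ∫⁻ x, f x * g (y - x) ∂μ := by
        rw [lintegral_withDensity_eq_lintegral_mul _ hconv hφ]
        rfl

lemma map_prodMk_prod_eq_withDensity {α β γ : Type*} [MeasurableSpace α] [MeasurableSpace β]
    [MeasurableSpace γ] {μ : Measure α} {η : Measure β} {ν : Measure γ} [SFinite η] [SFinite ν]
    {F : α → β → γ} (hF : Measurable (Function.uncurry F)) {ρ : α × γ → ℝ≥0∞}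
    (hρ : Measurable ρ) (h : ∀ᵐ a ∂μ, η.map (F a) = ν.withDensity fun c => ρ (a, c)) :
    (μ.prod η).map (fun q => (q.1, F q.1 q.2)) = (μ.prod ν).withDensity ρ := by
  ext s hs
  have hT : Measurable fun q : α × β => (q.1, F q.1 q.2) := measurable_fst.prodMk hF
  rw [Measure.map_apply hT hs, Measure.prod_apply (hT hs), withDensity_apply _ hs,
    ← lintegral_indicator hs, lintegral_prod _ (hρ.indicator hs).aemeasurable]
  refine lintegral_congr_ae (h.mono fun a ha => ?_)
  have hFa : Measurable (F a) := hF.comp measurable_prodMk_left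
  change η (F a ⁻¹' (Prod.mk a ⁻¹' s)) = ∫⁻ c, s.indicator ρ (a, c) ∂ν
  rw [← Measure.map_apply hFa (measurable_prodMk_left hs),
    ha, withDensity_apply _ (measurable_prodMk_left hs), ← lintegral_indicator
      (measurable_prodMk_left hs)]
  rfl

/-- The density of the statement without its factor `1/(Γ(p)²Γ(1-p)²)`, as a lower integral. -/
noncomputable def intensityDensity (p : ℝ) (q : ℝ × ℝ) : ℝ≥0∞ :=
  ∫⁻ z, scaledBetaDensity (p - 1) (-p) q.1 z * scaledBetaDensity (-p) (p - 1) (1 - q.1) (q.2 - z)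

lemma measurable_intensityDensity (p : ℝ) : Measurable (intensityDensity p) :=
  Measurable.lintegral_prod_right'
    (f := fun r : (ℝ × ℝ) × ℝ => scaledBetaDensity (p - 1) (-p) r.1.1 r.2 *
      scaledBetaDensity (-p) (p - 1) (1 - r.1.1) (r.1.2 - r.2))
    (((measurable_scaledBetaDensity _ _).comp (measurable_fst.fst.prodMk measurable_snd)).mul
      ((measurable_scaledBetaDensity _ _).comp
        ((measurable_const.sub measurable_fst.fst).prodMk (measurable_fst.snd.sub measurable_snd))))

lemma map_convexCombination_prod_betaMeasure (p : ℝ) {u : ℝ} (hu : u ∈ Ioo 0 1) :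
    ((betaMeasure p (1 - p)).prod (betaMeasure (1 - p) p)).map
        (fun r => u * r.1 + (1 - u) * r.2) =
      ENNReal.ofReal (Real.Gamma p * Real.Gamma (1 - p))⁻¹ ^ 2 •
        volume.withDensity fun y => intensityDensity p (u, y) := by
  have hd : ∀ s t w, Measurable (scaledBetaDensity s t w) := fun s t w =>
    (measurable_scaledBetaDensity s t).comp measurable_prodMk_left
  have hsplit : (fun r : ℝ × ℝ => u * r.1 + (1 - u) * r.2) =
      (fun r => r.1 + r.2) ∘ Prod.map (u * ·) ((1 - u) * ·) := rfl
  rw [hsplit, ← Measure.map_map (by fun_prop) (by fun_prop), ← Measure.map_prod_map _ _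
    (by fun_prop) (by fun_prop), ← Measure.conv, betaMeasure_eq_smul_withDensity,
    betaMeasure_eq_smul_withDensity, sub_sub_cancel_left, Measure.map_smul, Measure.map_smul,
    map_mul_left_withDensity_scaledBetaDensity (by ring) hu.1,
    map_mul_left_withDensity_scaledBetaDensity (by ring) (sub_pos.2 hu.2),
    Measure.conv_smul_left, Measure.conv_smul_right, smul_smul, mul_comm (Real.Gamma (1 - p)),
    ← sq, withDensity_conv_withDensity (hd _ _ _) (hd _ _ _)]
  rfl

lemma map_prod_betaMeasure_eq_withDensity_intensityDensity (p : ℝ) :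
    ((volume.restrict (Ioo 0 1)).prod ((betaMeasure p (1 - p)).prod (betaMeasure (1 - p) p))).map
        (fun q : ℝ × ℝ × ℝ => (q.1, q.1 * q.2.1 + (1 - q.1) * q.2.2)) =
      volume.withDensity ((Ioo 0 1 ×ˢ univ).indicator
        (ENNReal.ofReal (Real.Gamma p * Real.Gamma (1 - p))⁻¹ ^ 2 • intensityDensity p)) := by
  have hρ := (measurable_intensityDensity p).const_smul
    (ENNReal.ofReal (Real.Gamma p * Real.Gamma (1 - p))⁻¹ ^ 2)
  rw [withDensity_indicator (measurableSet_Ioo.prod MeasurableSet.univ), Measure.volume_eq_prod,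
    ← Measure.restrict_prod_eq_prod_univ]
  refine map_prodMk_prod_eq_withDensity (F := fun (u : ℝ) (r : ℝ × ℝ) => u * r.1 + (1 - u) * r.2)
    (by fun_prop) hρ (ae_restrict_of_forall_mem measurableSet_Ioo fun u hu => ?_)
  rw [map_convexCombination_prod_betaMeasure p hu]
  exact (withDensity_smul _ ((measurable_intensityDensity p).comp measurable_prodMk_left)).symm

lemma lintegral_scaledBetaDensity_mul_scaledBetaDensity_sub (s t s' t' x y : ℝ) :
    ∫⁻ z, scaledBetaDensity s t x z * scaledBetaDensity s' t' (1 - x) (y - z) =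
      ∫⁻ z in Ioc (max (x + y - 1) 0) (min x y),
        ENNReal.ofReal (z ^ s * (x - z) ^ t * (y - z) ^ s' * (1 - x - y + z) ^ t') := by
  rw [Measure.restrict_congr_set Ioc_ae_eq_Icc, ← lintegral_indicator measurableSet_Icc]
  refine lintegral_congr fun z => ?_
  have hmem : z ∈ Icc (max (x + y - 1) 0) (min x y) ↔ z ∈ Icc 0 x ∧ y - z ∈ Icc 0 (1 - x) := by
    simp only [mem_Icc, max_le_iff, le_min_iff, sub_nonneg]
    constructor <;> rintro ⟨⟨_, _⟩, _, _⟩ <;> refine ⟨⟨?_, ?_⟩, ?_, ?_⟩ <;> linarith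
  by_cases hz : z ∈ Icc 0 x ∧ y - z ∈ Icc 0 (1 - x)
  · rw [scaledBetaDensity, scaledBetaDensity, indicator_of_mem hz.1, indicator_of_mem hz.2,
      indicator_of_mem (hmem.2 hz), ← ENNReal.ofReal_mul (mul_nonneg
        (Real.rpow_nonneg hz.1.1 _) (Real.rpow_nonneg (sub_nonneg.2 hz.1.2) _))]
    congr 1
    rw [show 1 - x - (y - z) = 1 - x - y + z by ring]
    ring
  · rw [indicator_of_notMem (mt hmem.1 hz)]
    rcases not_and_or.1 hz with h | h
    · simp only [scaledBetaDensity, indicator_of_notMem h, zero_mul]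
    · simp only [scaledBetaDensity, indicator_of_notMem h, mul_zero]

lemma ofReal_setIntegral_eq_setLIntegral {α : Type*} [MeasurableSpace α] {μ : Measure α}
    {f : α → ℝ} {s : Set α} (hs : MeasurableSet s) (hf : AEStronglyMeasurable f (μ.restrict s))
    (hnonneg : ∀ x ∈ s, 0 ≤ f x) (hfin : ∫⁻ x in s, ENNReal.ofReal (f x) ∂μ ≠ ⊤) :
    ENNReal.ofReal (∫ x in s, f x ∂μ) = ∫⁻ x in s, ENNReal.ofReal (f x) ∂μ := by
  have hnonneg_ae : 0 ≤ᵐ[μ.restrict s] f := ae_restrict_of_forall_mem hs hnonneg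
  exact ofReal_integral_eq_lintegral_ofReal
    ⟨hf, (hasFiniteIntegral_iff_ofReal hnonneg_ae).2 hfin.lt_top⟩ hnonneg_ae

lemma ofReal_setIntegral_eq_lintegral_scaledBetaDensity_mul {s t s' t' x y : ℝ}
    (hfin : ∫⁻ z, scaledBetaDensity s t x z * scaledBetaDensity s' t' (1 - x) (y - z) ≠ ⊤) :
    ENNReal.ofReal (∫ z in Ioc (max (x + y - 1) 0) (min x y),
        z ^ s * (x - z) ^ t * (y - z) ^ s' * (1 - x - y + z) ^ t') =
      ∫⁻ z, scaledBetaDensity s t x z * scaledBetaDensity s' t' (1 - x) (y - z) := by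
  rw [lintegral_scaledBetaDensity_mul_scaledBetaDensity_sub] at hfin ⊢
  refine ofReal_setIntegral_eq_setLIntegral measurableSet_Ioc
    (Measurable.aestronglyMeasurable (by fun_prop)) (fun z hz => ?_) hfin
  rw [mem_Ioc, max_lt_iff, le_min_iff] at hz
  have h₁ : 0 ≤ x - z := by linarith
  have h₂ : 0 ≤ y - z := by linarith
  have h₃ : 0 ≤ 1 - x - y + z := by linarith
  have := Real.rpow_nonneg hz.1.2.le s
  have := Real.rpow_nonneg h₁ t
  have := Real.rpow_nonneg h₂ s'
  have := Real.rpow_nonneg h₃ t'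
  positivity

lemma Ioc_max_min_eq_empty_of_notMem_Ioo {x : ℝ} (hx : x ∉ Ioo 0 1) (y : ℝ) :
    Ioc (max (x + y - 1) 0) (min x y) = ∅ := by
  refine Ioc_eq_empty (not_lt.2 ?_)
  rcases not_and_or.1 hx with h | h <;> rw [not_lt] at h
  · exact (min_le_left _ _).trans (h.trans (le_max_right _ _))
  · exact (min_le_right _ _).trans ((by linarith : y ≤ x + y - 1).trans (le_max_left _ _))

lemma indicator_smul_intensityDensity_eq {p k : ℝ} (hk : 0 < k) {x y : ℝ}
    (hfin : (Ioo 0 1 ×ˢ univ).indicator (ENNReal.ofReal k • intensityDensity p) (x, y) < ⊤) :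
    (Ioo 0 1 ×ˢ univ).indicator (ENNReal.ofReal k • intensityDensity p) (x, y) =
      ENNReal.ofReal (k * ∫ t in Ioc (max (x + y - 1) 0) (min x y),
        t ^ (p - 1) * (x - t) ^ (-p) * (y - t) ^ (-p) * (1 - x - y + t) ^ (p - 1)) := by
  by_cases hx : x ∈ Ioo 0 1
  · rw [indicator_of_mem (mk_mem_prod hx (mem_univ y)), Pi.smul_apply, smul_eq_mul] at hfin ⊢
    rw [ENNReal.ofReal_mul hk.le, intensityDensity,
      ofReal_setIntegral_eq_lintegral_scaledBetaDensity_mul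
        (ENNReal.lt_top_of_mul_ne_top_right hfin.ne (ENNReal.ofReal_pos.2 hk).ne').ne]
  · rw [indicator_of_notMem (fun h => hx h.1), Ioc_max_min_eq_empty_of_notMem_Ioo hx,
      Measure.restrict_empty, integral_zero_measure, mul_zero, ENNReal.ofReal_zero]

/-- for `p ∈ (0,1)`, the pushforward of `Leb[0,1] ⊗ β(p,1−p) ⊗ β(1−p,p)` under
`(u,a,b) ↦ (u, u·a + (1−u)·b)` is absolutely continuous with respect to Lebesgue measure on
the square, with density
`(x,y) ↦ (1/(Γ(p)²Γ(1−p)²)) ∫_{max(x+y−1,0)}^{min(x,y)} z^{p−1}(x−z)^{−p}(y−z)^{−p}(1−x−y+z)^{p−1} dz`. -/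
theorem intensity_measure_density (p : ℝ) (hp : p ∈ Set.Ioo (0:ℝ) 1) :
    Measure.map (fun q : ℝ × ℝ × ℝ => (q.1, q.1 * q.2.1 + (1 - q.1) * q.2.2))
      ((volume.restrict (Set.Icc (0:ℝ) 1)).prod
        ((betaMeasure p (1 - p)).prod (betaMeasure (1 - p) p))) =
    (volume : Measure (ℝ × ℝ)).withDensity (fun z =>
      ENNReal.ofReal ((1 / (Real.Gamma p ^ 2 * Real.Gamma (1 - p) ^ 2)) *
        ∫ t in Set.Ioc (max (z.1 + z.2 - 1) 0) (min z.1 z.2),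
          t ^ (p - 1) * (z.1 - t) ^ (-p) * (z.2 - t) ^ (-p) *
            (1 - z.1 - z.2 + t) ^ (p - 1))) := by
  have hΓ : 0 < Real.Gamma p * Real.Gamma (1 - p) :=
    mul_pos (Real.Gamma_pos_of_pos hp.1) (Real.Gamma_pos_of_pos (sub_pos.2 hp.2))
  have := isProbabilityMeasure_betaMeasure hp.1 (sub_pos.2 hp.2) (add_sub_cancel p 1)
  have := isProbabilityMeasure_betaMeasure (sub_pos.2 hp.2) hp.1 (sub_add_cancel 1 p)
  have hconst : ENNReal.ofReal (Real.Gamma p * Real.Gamma (1 - p))⁻¹ ^ 2 =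
      ENNReal.ofReal (1 / (Real.Gamma p ^ 2 * Real.Gamma (1 - p) ^ 2)) := by
    rw [← ENNReal.ofReal_pow (inv_nonneg.2 hΓ.le), inv_pow, mul_pow, one_div]
  have hmap := map_prod_betaMeasure_eq_withDensity_intensityDensity p
  rw [Measure.restrict_congr_set Ioo_ae_eq_Icc, hconst] at hmap
  set k : ℝ := 1 / (Real.Gamma p ^ 2 * Real.Gamma (1 - p) ^ 2)
  have hk : 0 < k := one_div_pos.2 (by rw [← mul_pow]; exact pow_pos hΓ 2)
  -- `intensityDensity` can be infinite (on the diagonal when `p ≥ 1/2`), where the Bochner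
  -- integral of the statement is `0`; finiteness of the measure makes this a null set.
  have hfin : ∀ᵐ q, (Ioo 0 1 ×ˢ univ).indicator (ENNReal.ofReal k • intensityDensity p) q < ⊤ := by
    refine ae_lt_top (((measurable_intensityDensity p).const_smul _).indicator
      (measurableSet_Ioo.prod MeasurableSet.univ)) ?_
    rw [← setLIntegral_univ, ← withDensity_apply _ MeasurableSet.univ, ← hmap]
    exact measure_ne_top _ _
  rw [hmap]
  exact withDensity_congr_ae (hfin.mono fun ⟨x, y⟩ hq => indicator_smul_intensityDensity_eq hk hq)
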